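/- Let μ be a probability measure on G = (ℤ/2ℤ)³. If max_{x∈G} μ({x}) > 5/6, then μ ∈ TEC(G). -/

import Mathlib

open scoped BigOperators

/-- The group `G = (ℤ/2ℤ)³`. -/
abbrev G : Type := ZMod 2 × ZMod 2 × ZMod 2

/-- The character pairing `(x,y) = (-1)^(x₁y₁+x₂y₂+x₃y₃)`. -/
noncomputable def pairing (x y : G) : ℝ :=
  (-1 : ℝ) ^ (x.1.val * y.1.val + x.2.1.val * y.2.1.val + x.2.2.val * y.2.2.val)

/-- A probability measure on `G`, given by its mass function. -/
def IsProb (p : G → ℝ) : Prop := (∀ x, 0 ≤ p x) ∧ ∑ x : G, p x = 1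

/-- The characteristic function `μ̂(y) = Σ_x (x,y) μ({x})`. -/
noncomputable def charFn (p : G → ℝ) (y : G) : ℝ := ∑ x : G, pairing x y * p x

/-- The measure of a set `E ⊆ G`. -/
noncomputable def measOf (p : G → ℝ) (E : Set G) : ℝ := ∑ x : G, E.indicator p x

/-- `μ` has a trivial equivalence class: every probability measure `ν` with
`|ν̂| = |μ̂|` is a shift `μₓ` of `μ` (central symmetry is the identity on `G`). -/
def TEC (p : G → ℝ) : Prop :=
  ∀ q : G → ℝ, IsProb q → (∀ y : G, |charFn q y| = |charFn p y|) →
    ∃ x : G, ∀ e : G, q e = p (e + x)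

/-- `u(E) = max_{x ∈ E} μ({x})`. -/
noncomputable def uOf (p : G → ℝ) (E : Set G) : ℝ := sSup (p '' E)

/-- `v(E) = min_{x ∈ E} μ({x})`. -/
noncomputable def vOf (p : G → ℝ) (E : Set G) : ℝ := sInf (p '' E)

/-- `μ ∈ U(E)` iff `2 u(E) > μ(E)`. -/
def USet (p : G → ℝ) (E : Set G) : Prop := measOf p E < 2 * uOf p E

/-- `μ ∈ V(E)` iff `1/2 + 2 v(E) < μ(E)`. -/
def VSet (p : G → ℝ) (E : Set G) : Prop := 1/2 + 2 * vOf p E < measOf p E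

/-! If `|ν̂| = |μ̂|`, then `ν̂ = ε μ̂` for a sign function `ε`, so `ν = d ⋆ μ` with `d = ε̂ / 8`.
Parseval and `ε(0) = 1` give `∑ d = ∑ d² = 1`, and `d` takes values in `ℤ/4` because `8 d(x)` is a
sum of eight signs. Positivity of `ν` at `x + a`, where `a` is the big atom of `μ`, forces
`d(x) > -1/4`, hence `d ≥ 0`; a nonnegative vector with `∑ d = ∑ d² = 1` is a unit vector `δ_{x₀}`,
and then `ν = δ_{x₀} ⋆ μ` is a shift of `μ`. -/

open Finset

theorem Finset.exists_sum_eq_two_mul_sub_card {ι : Type*} (s : Finset ι) (f : ι → ℝ)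
    (hf : ∀ i ∈ s, f i = 1 ∨ f i = -1) : ∃ n : ℤ, ∑ i ∈ s, f i = 2 * n - #s := by
  classical
  induction s using Finset.induction_on with
  | empty => exact ⟨0, by simp⟩
  | insert i s hi ih =>
    obtain ⟨n, hn⟩ := ih fun j hj => hf j (mem_insert_of_mem hj)
    rw [sum_insert hi, card_insert_of_notMem hi, hn]
    rcases hf i (mem_insert_self i s) with h | h
    · exact ⟨n + 1, by rw [h]; push_cast; ring⟩
    · exact ⟨n, by rw [h]; push_cast; ring⟩

theorem exists_eq_single_of_sum_eq_one_of_sum_sq_eq_one {ι : Type*} [Fintype ι] [DecidableEq ι]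
    {d : ι → ℝ} (h0 : ∀ i, 0 ≤ d i) (h1 : ∑ i, d i = 1) (h2 : ∑ i, d i ^ 2 = 1) :
    ∃ i, d = Pi.single i 1 := by
  have hle : ∀ i, d i ≤ 1 := fun i =>
    h1 ▸ single_le_sum (fun j _ => h0 j) (mem_univ i)
  have hzero : ∀ i, d i * (1 - d i) = 0 := by
    have hsum : ∑ i, d i * (1 - d i) = 0 := by
      simp only [mul_sub, mul_one, ← sq, sum_sub_distrib, h1, h2, sub_self]
    exact fun i => (sum_eq_zero_iff_of_nonneg fun j _ =>
      mul_nonneg (h0 j) (sub_nonneg.2 (hle j))).1 hsum i (mem_univ i)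
  obtain ⟨i, -, hi⟩ : ∃ i ∈ univ, d i ≠ 0 := exists_ne_zero_of_sum_ne_zero (by rw [h1]; norm_num)
  have hi1 : d i = 1 := by
    have := hzero i
    rcases mul_eq_zero.1 this with h | h
    · exact absurd h hi
    · linarith
  have hrest : ∑ j ∈ univ.erase i, d j = 0 := by
    have := add_sum_erase univ d (mem_univ i)
    linarith
  refine ⟨i, funext fun j => ?_⟩
  rcases eq_or_ne j i with rfl | hj
  · simp [hi1]
  · rw [Pi.single_eq_of_ne hj]
    exact (sum_eq_zero_iff_of_nonneg fun k _ => h0 k).1 hrest j (mem_erase.2 ⟨hj, mem_univ j⟩)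

theorem exists_sign_eq_mul_of_abs_eq {a b : ℝ} (h : |a| = |b|) :
    ∃ s : ℝ, (s = 1 ∨ s = -1) ∧ a = s * b := by
  rcases abs_eq_abs.1 h with h | h
  · exact ⟨1, Or.inl rfl, by rw [h, one_mul]⟩
  · exact ⟨-1, Or.inr rfl, by rw [h, neg_one_mul]⟩

theorem exists_eq_uOf_univ (p : G → ℝ) : ∃ a, p a = uOf p Set.univ :=
  (Set.image_nonempty.2 Set.univ_nonempty).csSup_mem (Set.finite_univ.image p)
    |>.imp fun _ h => h.2

def pairingInt (x y : G) : ℤ :=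
  (-1) ^ (x.1.val * y.1.val + x.2.1.val * y.2.1.val + x.2.2.val * y.2.2.val)

@[simp, norm_cast]
theorem intCast_pairingInt (x y : G) : (pairingInt x y : ℝ) = pairing x y := by
  simp [pairing, pairingInt]

theorem pairing_comm (x y : G) : pairing x y = pairing y x := by
  simp only [pairing, Nat.mul_comm]

theorem pairing_zero_right (x : G) : pairing x 0 = 1 := by
  simp [pairing]

theorem pairing_eq_one_or_neg_one (x y : G) : pairing x y = 1 ∨ pairing x y = -1 :=
  neg_one_pow_eq_or ℝ _

theorem pairing_add_left (x z y : G) : pairing (x + z) y = pairing x y * pairing z y := by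
  have h : ∀ x z y : G, pairingInt (x + z) y = pairingInt x y * pairingInt z y := by decide
  simpa using congrArg (Int.cast : ℤ → ℝ) (h x z y)

theorem sum_pairing (x : G) : ∑ y, pairing x y = if x = 0 then 8 else 0 := by
  have h : ∀ x : G, ∑ y, pairingInt x y = if x = 0 then 8 else 0 := by decide
  have := congrArg (fun n : ℤ => (n : ℝ)) (h x)
  simpa [apply_ite] using this

theorem charFn_zero (r : G → ℝ) : charFn r 0 = ∑ x, r x := by
  simp [charFn, pairing_zero_right]

theorem charFn_charFn (r : G → ℝ) (e : G) : charFn (charFn r) e = 8 * r e := by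
  calc charFn (charFn r) e
      = ∑ x, r x * ∑ y, pairing (e + x) y := by
        simp only [charFn, mul_sum, pairing_add_left, pairing_comm _ e]
        rw [sum_comm]
        exact sum_congr rfl fun _ _ => sum_congr rfl fun _ _ => by ring
    _ = 8 * r e := by
        simp [sum_pairing, CharTwo.add_eq_zero (R := G), mul_comm]

theorem charFn_injective : Function.Injective charFn := fun f g h =>
  funext fun x => by
    have := charFn_charFn f x
    rw [h, charFn_charFn] at this
    linarith

theorem charFn_div_const (r : G → ℝ) (c : ℝ) (y : G) :
    charFn (fun x => r x / c) y = charFn r y / c := by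
  simp only [charFn, sum_div, mul_div_assoc]

theorem sum_sq_charFn (r : G → ℝ) : ∑ y, charFn r y ^ 2 = 8 * ∑ x, r x ^ 2 := by
  calc ∑ y, charFn r y ^ 2
      = ∑ y, (∑ x, pairing x y * r x) * charFn r y := sum_congr rfl fun y _ => sq _
    _ = ∑ x, r x * ∑ y, pairing y x * charFn r y := by
        simp only [sum_mul, mul_sum]
        rw [sum_comm]
        refine sum_congr rfl fun x _ => sum_congr rfl fun y _ => ?_
        rw [pairing_comm]
        ring
    _ = ∑ x, r x * (8 * r x) := sum_congr rfl fun x _ => by rw [← charFn_charFn]; rfl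
    _ = 8 * ∑ x, r x ^ 2 := by
        rw [mul_sum]
        exact sum_congr rfl fun _ _ => by ring

/-- Convolution on `G`; since `-z = z`, the usual `f (x - z)` is written `f (x + z)`. -/
noncomputable def conv (f g : G → ℝ) (x : G) : ℝ := ∑ z, f (x + z) * g z

theorem charFn_conv (f g : G → ℝ) (y : G) : charFn (conv f g) y = charFn f y * charFn g y := by
  have hshift : ∀ z, ∑ x, pairing x y * f (x + z) = pairing z y * charFn f y := fun z => by
    rw [charFn, mul_sum]
    refine (Fintype.sum_equiv (Equiv.addRight z) _ _ fun w => ?_).symm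
    rw [Equiv.coe_addRight, CharTwo.add_cancel_right, pairing_add_left]
    ring
  calc charFn (conv f g) y
      = ∑ z, g z * ∑ x, pairing x y * f (x + z) := by
        simp only [charFn, conv, mul_sum]
        rw [sum_comm]
        exact sum_congr rfl fun _ _ => sum_congr rfl fun _ _ => by ring
    _ = charFn f y * ∑ z, pairing z y * g z := by
        simp only [hshift, mul_sum]
        exact sum_congr rfl fun _ _ => by ring

theorem conv_single (g : G → ℝ) (a x : G) : conv (Pi.single a 1) g x = g (x + a) := by
  rw [conv, Fintype.sum_eq_single (x + a)]
  · rw [CharTwo.add_cancel_left, Pi.single_eq_same, one_mul]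
  · intro z hz
    rw [Pi.single_apply, if_neg, zero_mul]
    rintro rfl
    exact hz (CharTwo.add_cancel_left x z).symm

theorem conv_le {d p : G → ℝ} (hd : ∀ x, d x ≤ 1) (hp : IsProb p) (x a : G) :
    conv d p x ≤ d (x + a) * p a + (1 - p a) := by
  have hrest : ∑ z ∈ univ.erase a, d (x + z) * p z ≤ ∑ z ∈ univ.erase a, p z :=
    sum_le_sum fun z _ => mul_le_of_le_one_left (hp.1 z) (hd _)
  have hsplit := add_sum_erase univ p (mem_univ a)
  rw [conv, ← add_sum_erase univ _ (mem_univ a)]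
  linarith [hp.2]

theorem nonneg_of_conv_nonneg {d p : G → ℝ} {a : G} (hp : IsProb p) (ha : 4 / 5 < p a)
    (hd : ∀ x, d x ≤ 1) (hd_int : ∀ x, ∃ n : ℤ, d x = n / 4) (hconv : ∀ x, 0 ≤ conv d p x)
    (x : G) : 0 ≤ d x := by
  obtain ⟨n, hn⟩ := hd_int x
  have hlow : p a - 1 ≤ d x * p a := by
    have := conv_le hd hp (x + a) a
    rw [CharTwo.add_cancel_right] at this
    linarith [hconv (x + a)]
  -- `p a > 4/5` gives `d x > -1/4`, and `d x ∈ ℤ/4`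
  have hn0 : (0 : ℝ) ≤ n := by
    have : (-1 : ℝ) < n := by
      by_contra! h
      nlinarith [hp.1 a]
    have : (-1 : ℤ) < n := by exact_mod_cast this
    exact_mod_cast (by omega : (0 : ℤ) ≤ n)
  rw [hn]
  positivity

theorem exists_charFn_div_eight_eq_intCast_div_four {ε : G → ℝ}
    (hε : ∀ y, ε y = 1 ∨ ε y = -1) (x : G) : ∃ n : ℤ, charFn ε x / 8 = n / 4 := by
  obtain ⟨n, hn⟩ := univ.exists_sum_eq_two_mul_sub_card (fun y => pairing y x * ε y)
    fun y _ => by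
      rcases pairing_eq_one_or_neg_one y x with h | h <;> rcases hε y with h' | h' <;>
        simp [h, h']
  refine ⟨n - 4, ?_⟩
  rw [charFn, hn, card_univ, show Fintype.card G = 8 from rfl]
  push_cast
  ring

/-- Corollary 1: if `max_{x∈G} μ({x}) > 5/6`, then `μ ∈ TEC(G)`. -/
theorem stmt9 (p : G → ℝ) (hp : IsProb p)
    (hbig : 5/6 < uOf p Set.univ) :
    TEC p := by
  intro q hq habs
  obtain ⟨a, ha⟩ := exists_eq_uOf_univ p
  choose ε hε_sign hε using fun y => exists_sign_eq_mul_of_abs_eq (habs y)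
  have hε_zero : ε 0 = 1 := by
    simpa [charFn_zero, hp.2, hq.2] using (hε 0).symm
  set d : G → ℝ := fun x => charFn ε x / 8 with hd_def
  have hd_charFn : charFn d = ε := funext fun y => by
    rw [hd_def, charFn_div_const, charFn_charFn]
    ring
  have hq_conv : q = conv d p := charFn_injective <| funext fun y => by
    rw [charFn_conv, hd_charFn, hε]
  have hd_sum : ∑ x, d x = 1 := by rw [← charFn_zero, hd_charFn, hε_zero]
  have hd_sq : ∑ x, d x ^ 2 = 1 := by
    have hε_sq : ∀ y, ε y ^ 2 = 1 := fun y => by rcases hε_sign y with h | h <;> simp [h]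
    have := sum_sq_charFn d
    simp only [hd_charFn, hε_sq, sum_const, card_univ] at this
    norm_num at this
    linarith
  have hd_le_one : ∀ x, d x ≤ 1 := fun x => by
    nlinarith [hd_sq ▸ single_le_sum (fun y _ => sq_nonneg (d y)) (mem_univ x)]
  have hd_nonneg : ∀ x, 0 ≤ d x := nonneg_of_conv_nonneg (a := a) hp (by linarith) hd_le_one
    (exists_charFn_div_eight_eq_intCast_div_four hε_sign) (hq_conv ▸ hq.1)
  obtain ⟨x₀, hx₀⟩ := exists_eq_single_of_sum_eq_one_of_sum_sq_eq_one hd_nonneg hd_sum hd_sq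
  exact ⟨x₀, fun e => by rw [hq_conv, hx₀, conv_single]⟩
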